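/- The codewords G(a_0,a_1) = {(x, a_0x + a_1x^2) : x ∈ W} of the lifted Gabidulin code cover every 2-dimensional subspace L of W × F_16 with L ∩ ({0} × F_16) = {0}: each such 'line disjoint from the special solid' is contained in exactly one codeword, and the total count is 7·256 = 1792. -/

import Mathlib

/-- The field `F_16`, a `4`-dimensional vector space over `F_2`. -/
abbrev F16 := GaloisField 2 4

/-- The `F_2`-linear endomorphism of `F_16` induced by `a_0 x + a_1 x^2`. -/
noncomputable def lmap (a0 a1 : F16) : F16 →ₗ[ZMod 2] F16 where
  toFun x := a0 * x + a1 * x ^ 2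
  map_add' x y := by
    have h : (x + y) ^ 2 = x ^ 2 + y ^ 2 := CharTwo.add_sq x y
    show a0 * (x + y) + a1 * (x + y) ^ 2 = (a0 * x + a1 * x ^ 2) + (a0 * y + a1 * y ^ 2)
    rw [h]; ring
  map_smul' c x := by
    simp only [RingHom.id_apply, Algebra.smul_def, mul_pow]
    have hc : (algebraMap (ZMod 2) F16 c) ^ 2 = algebraMap (ZMod 2) F16 c := by
      rw [← map_pow]; congr 1; revert c; decide
    rw [hc]; ring

/-- The codeword `G(a_0, a_1) = {(x, a_0 x + a_1 x^2) : x ∈ W}`, as a subspace of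
`W × F_16`. -/
noncomputable def Gc (W : Submodule (ZMod 2) F16) (a0 a1 : F16) :
    Submodule (ZMod 2) (↥W × F16) :=
  LinearMap.graph ((lmap a0 a1).comp W.subtype)

/-- The special solid `S = {0} × F_16` inside `W × F_16`. -/
noncomputable def specialSolid (W : Submodule (ZMod 2) F16) :
    Submodule (ZMod 2) (↥W × F16) :=
  (⊥ : Submodule (ZMod 2) ↥W).prod (⊤ : Submodule (ZMod 2) F16)

/-!
A line `L` of `W × F₁₆` meeting `{0} × F₁₆` trivially projects isomorphically onto a plane of
`W`, spanned by two nonzero distinct `u, v ∈ F₁₆`, so `L` is the graph of a linear map on that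
plane, determined by its values `y, z` at `u, v`. Since `u v (v - u) ≠ 0`, the system
`a₀ u + a₁ u² = y`, `a₀ v + a₁ v² = z` has exactly one solution, which gives the unique codeword
through `L`. Conversely each codeword `G(a₀, a₁)` is the image of `W` under the injective map
`x ↦ (x, a₀ x + a₁ x²)`, so its lines are the images of the `7` planes of `W ≅ F₂³` (the kernels
of the `7` nonzero linear forms), and the lines are in bijection with the `16² · 7 = 1792` pairs
`((a₀, a₁), plane)`.
-/

open Module LinearMap

theorem existsUnique_linearized_interpolation {K : Type*} [Field K] {u v : K} (hu : u ≠ 0)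
    (hv : v ≠ 0) (huv : u ≠ v) (y z : K) :
    ∃! a : K × K, a.1 * u + a.2 * u ^ 2 = y ∧ a.1 * v + a.2 * v ^ 2 = z := by
  have hd : u * v * (v - u) ≠ 0 := mul_ne_zero (mul_ne_zero hu hv) (sub_ne_zero.2 huv.symm)
  refine ⟨((y * v ^ 2 - z * u ^ 2) / (u * v * (v - u)), (z * u - y * v) / (u * v * (v - u))),
    ⟨?_, ?_⟩, ?_⟩
  · field_simp; ring
  · field_simp; ring
  · rintro ⟨a₀, a₁⟩ ⟨h₁, h₂⟩
    refine Prod.ext ?_ ?_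
    · rw [eq_div_iff hd]; linear_combination v ^ 2 * h₁ - u ^ 2 * h₂
    · rw [eq_div_iff hd]; linear_combination u * h₂ - v * h₁

theorem card_hyperplanes_zmod_two {V : Type*} [AddCommGroup V] [Module (ZMod 2) V]
    [FiniteDimensional (ZMod 2) V] {n : ℕ} (hV : finrank (ZMod 2) V = n + 1) :
    Nat.card {U : Submodule (ZMod 2) V // finrank (ZMod 2) U = n} = 2 ^ (n + 1) - 1 := by
  let kerOf (φ : {φ : Dual (ZMod 2) V // φ ≠ 0}) :
      {U : Submodule (ZMod 2) V // finrank (ZMod 2) U = n} :=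
    ⟨ker φ.1, by have := Dual.finrank_ker_add_one_of_ne_zero φ.2; omega⟩
  have hinj : Function.Injective kerOf := by
    intro φ ψ h
    have hker : ∀ x, φ.1 x = 0 ↔ ψ.1 x = 0 := SetLike.ext_iff.1 (congrArg Subtype.val h)
    have hdet : ∀ a b : ZMod 2, (a = 0 ↔ b = 0) → a = b := by decide
    exact Subtype.ext (LinearMap.ext fun x ↦ hdet _ _ (hker x))
  have hsurj : Function.Surjective kerOf := by
    rintro ⟨U, hU⟩
    obtain ⟨φ, hφ, hUφ⟩ :=
      U.exists_le_ker_of_lt_top (Submodule.lt_top_of_finrank_lt_finrank (by omega))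
    refine ⟨⟨φ, hφ⟩, Subtype.ext (Submodule.eq_of_le_of_finrank_eq hUφ ?_).symm⟩
    have := Dual.finrank_ker_add_one_of_ne_zero hφ
    omega
  classical
  have : Finite (Dual (ZMod 2) V) := Module.finite_of_finite (ZMod 2)
  have : Fintype (Dual (ZMod 2) V) := Fintype.ofFinite _
  rw [← Nat.card_eq_of_bijective kerOf ⟨hinj, hsurj⟩, Nat.card_eq_fintype_card,
    Fintype.card_subtype_compl, Fintype.card_subtype_eq, ← Nat.card_eq_fintype_card,
    Module.natCard_eq_pow_finrank (K := ZMod 2), Subspace.dual_finrank_eq, hV, Nat.card_zmod]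

section Graph

variable {R M N : Type*} [Ring R] [AddCommGroup M] [AddCommGroup N] [Module R M] [Module R N]

theorem Submodule.le_graph_iff {f : M →ₗ[R] N} {L : Submodule R (M × N)} :
    L ≤ f.graph ↔ f ∘ₗ LinearMap.fst R M N ∘ₗ L.subtype = LinearMap.snd R M N ∘ₗ L.subtype := by
  simp only [SetLike.le_def, mem_graph_iff, LinearMap.ext_iff, coe_comp, Function.comp_apply,
    Submodule.coe_subtype, Subtype.forall]
  exact forall₂_congr fun _ _ ↦ eq_comm

theorem Submodule.ker_fst_comp_subtype {L : Submodule R (M × N)}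
    (hL : L ⊓ (⊥ : Submodule R M).prod ⊤ = ⊥) : ker (LinearMap.fst R M N ∘ₗ L.subtype) = ⊥ := by
  rw [ker_comp, ← comap_bot, Submodule.comap_fst, ← Submodule.disjoint_iff_comap_eq_bot,
    disjoint_iff, hL]

theorem Submodule.finrank_map_fst_of_inf_eq_bot {L : Submodule R (M × N)}
    (hL : L ⊓ (⊥ : Submodule R M).prod ⊤ = ⊥) :
    finrank R (L.map (LinearMap.fst R M N)) = finrank R L := by
  rw [← finrank_range_of_inj (LinearMap.ker_eq_bot.1 (ker_fst_comp_subtype hL)), range_comp,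
    range_subtype]

theorem LinearMap.graph_inf_prod_bot_top (f : M →ₗ[R] N) :
    f.graph ⊓ (⊥ : Submodule R M).prod ⊤ = ⊥ := by
  rw [eq_bot_iff]
  rintro ⟨x, y⟩ ⟨hxy, hx, -⟩
  simp_all [mem_graph_iff]

theorem Submodule.map_id_prod_le_graph (f : M →ₗ[R] N) (U : Submodule R M) :
    U.map (LinearMap.id.prod f) ≤ f.graph :=
  graph_eq_range_prod f ▸ map_le_range

theorem Submodule.finrank_map_id_prod (f : M →ₗ[R] N) (U : Submodule R M) :
    finrank R (U.map (LinearMap.id.prod f)) = finrank R U :=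
  (equivMapOfInjective _ (fun _ _ h ↦ congrArg Prod.fst h) U).finrank_eq.symm

theorem Submodule.map_fst_map_id_prod (f : M →ₗ[R] N) (U : Submodule R M) :
    (U.map (LinearMap.id.prod f)).map (LinearMap.fst R M N) = U := by
  rw [← map_comp, fst_prod, map_id]

theorem Submodule.map_id_prod_map_fst {f : M →ₗ[R] N} {L : Submodule R (M × N)}
    (hL : L ≤ f.graph) : (L.map (LinearMap.fst R M N)).map (LinearMap.id.prod f) = L := by
  have hfix : ∀ y ∈ L, LinearMap.id.prod f y.1 = y := fun y hy ↦
    Prod.ext rfl ((mem_graph_iff f y).1 (hL hy)).symm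
  ext x
  simp only [mem_map, LinearMap.fst_apply, exists_exists_and_eq_and]
  exact ⟨fun ⟨y, hy, hyx⟩ ↦ hyx ▸ (hfix y hy).symm ▸ hy, fun hx ↦ ⟨x, hx, hfix x hx⟩⟩

end Graph

theorem existsUnique_le_Gc (W : Submodule (ZMod 2) F16) {L : Submodule (ZMod 2) (↥W × F16)}
    (hL : finrank (ZMod 2) L = 2) (hLS : L ⊓ specialSolid W = ⊥) :
    ∃! p : F16 × F16, L ≤ Gc W p.1 p.2 := by
  let b := Module.finBasisOfFinrankEq (ZMod 2) L hL
  have hb :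
      LinearIndependent (ZMod 2) (W.subtype ∘ LinearMap.fst (ZMod 2) W F16 ∘ L.subtype ∘ b) :=
    (b.linearIndependent.map' _ (Submodule.ker_fst_comp_subtype hLS)).map' _ W.ker_subtype
  refine (existsUnique_congr fun p ↦ ?_).2 <| existsUnique_linearized_interpolation
    (hb.ne_zero 0) (hb.ne_zero 1) (hb.injective.ne zero_ne_one) (b 0).1.2 (b 1).1.2
  rw [Gc, Submodule.le_graph_iff]
  exact ⟨fun h ↦ ⟨LinearMap.congr_fun h (b 0), LinearMap.congr_fun h (b 1)⟩,
    fun h ↦ b.ext (Fin.forall_fin_two.2 h)⟩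

noncomputable def codewordLine (W : Submodule (ZMod 2) F16)
    (x : (F16 × F16) × {U : Submodule (ZMod 2) W // finrank (ZMod 2) U = 2}) :
    Submodule (ZMod 2) (↥W × F16) :=
  x.2.1.map (LinearMap.id.prod (lmap x.1.1 x.1.2 ∘ₗ W.subtype))

theorem codewordLine_le_Gc (W : Submodule (ZMod 2) F16)
    (x : (F16 × F16) × {U : Submodule (ZMod 2) W // finrank (ZMod 2) U = 2}) :
    codewordLine W x ≤ Gc W x.1.1 x.1.2 :=
  Submodule.map_id_prod_le_graph _ _

theorem range_codewordLine (W : Submodule (ZMod 2) F16) :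
    Set.range (codewordLine W) =
      {L : Submodule (ZMod 2) (↥W × F16) | finrank (ZMod 2) L = 2 ∧ L ⊓ specialSolid W = ⊥} := by
  ext L
  constructor
  · rintro ⟨⟨p, U, hU⟩, rfl⟩
    exact ⟨(Submodule.finrank_map_id_prod _ U).trans hU,
      eq_bot_mono (inf_le_inf_right _ (codewordLine_le_Gc W _)) (graph_inf_prod_bot_top _)⟩
  · rintro ⟨hL, hLS⟩
    obtain ⟨p, hp, -⟩ := existsUnique_le_Gc W hL hLS
    have hU : finrank (ZMod 2) (L.map (LinearMap.fst _ _ _)) = 2 :=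
      (Submodule.finrank_map_fst_of_inf_eq_bot hLS).trans hL
    exact ⟨⟨p, _, hU⟩, Submodule.map_id_prod_map_fst hp⟩

theorem codewordLine_injective (W : Submodule (ZMod 2) F16) :
    Function.Injective (codewordLine W) := by
  rintro ⟨p, U, hU⟩ ⟨q, V, _⟩ h
  obtain rfl : U = V := by
    simpa only [codewordLine, Submodule.map_fst_map_id_prod]
      using congrArg (Submodule.map (LinearMap.fst _ _ _)) h
  obtain ⟨hL, hLS⟩ := (range_codewordLine W).subset (Set.mem_range_self (p, ⟨U, hU⟩))
  obtain rfl : p = q := (existsUnique_le_Gc W hL hLS).unique (codewordLine_le_Gc W _)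
    (h ▸ codewordLine_le_Gc W _)
  rfl

/-- The lifted Gabidulin code covers each of the `1792` lines of `W × F_16` disjoint from the
special solid `S = {0} × F_16` exactly once. -/
theorem lifted_gabidulin_covers_free_lines (W : Submodule (ZMod 2) F16)
    (hW : Module.finrank (ZMod 2) W = 3) :
    (∀ L : Submodule (ZMod 2) (↥W × F16), Module.finrank (ZMod 2) L = 2 →
        L ⊓ specialSolid W = ⊥ → ∃! p : F16 × F16, L ≤ Gc W p.1 p.2) ∧
      {L : Submodule (ZMod 2) (↥W × F16) |
        Module.finrank (ZMod 2) L = 2 ∧ L ⊓ specialSolid W = ⊥}.ncard = 1792 := by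
  refine ⟨fun L hL hLS ↦ existsUnique_le_Gc W hL hLS, ?_⟩
  rw [← range_codewordLine, Set.ncard_range_of_injective (codewordLine_injective W),
    Nat.card_prod, Nat.card_prod, GaloisField.card 2 4 (by norm_num),
    card_hyperplanes_zmod_two hW]
  norm_num
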